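/- Decoupling of slow and fast variables. Let B be a complex Banach space and for each s ∈ [0,1] let L(s), P(s), A(s) be bounded operators on B such that: P(s) is a projection with ran P(s) = ker L(s) and ran(1−P(s)) = ran L(s); A(s) satisfies A(s)L(s) = L(s)A(s) = 1 − P(s) and A(s)P(s) = P(s)A(s) = 0; s ↦ L(s), P(s), A(s) are C² in norm. Let T(s,s') be the parallel transport of the family P(s), and let U_ε(s,s') be a propagator satisfying ε ∂_s U_ε(s,s') = L(s)U_ε(s,s'), U_ε(s,s) = 1 and ‖U_ε(s,s')‖ ≤ 1. Then there exists a constant C, depending only on the family, such that for all ε ∈ (0,1], all x₀ ∈ B, and all s ∈ [0,1], the solution x(s) = U_ε(s,0)x₀ of ε ẋ = L(s)x satisfies ‖P(s)x(s) − T(s,0)P(0)x₀‖ ≤ C ε ‖x₀‖. -/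

import Mathlib

/-!
With `G = P Ṗ A`, consider the error `v = (P - ε G) x - T(·,0) P(0) x₀`. Differentiating, the
fast term `ε⁻¹ P L x` vanishes because `P L = 0`, and the fast term of `ε G x` is
`G L x = P Ṗ (1 - P) x = P Ṗ x`, since `Ṗ = Ṗ P + P Ṗ` forces `P Ṗ P = 0`. What is left is
`v' = [Ṗ, P] v + ε ([Ṗ, P] G - G') x`, an equation of parallel transport type with an `O(ε)`
source, so Gronwall's inequality gives `‖v‖ = O(ε)`, and `‖ε G x‖ = O(ε)` as well.
-/

open Set

theorem gronwallBound_mul_mul (c δ K ε x : ℝ) :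
    gronwallBound (c * δ) K (c * ε) x = c * gronwallBound δ K ε x := by
  unfold gronwallBound
  split_ifs <;> ring

theorem norm_le_mul_gronwallBound_of_hasDerivWithinAt {E : Type*} [NormedAddCommGroup E]
    [NormedSpace ℝ E] {f f' : ℝ → E} {c δ K ε : ℝ} (hc : 0 ≤ c) (hδ : 0 ≤ δ) (hK : 0 ≤ K)
    (hε : 0 ≤ ε) (hf : ∀ u ∈ Icc (0:ℝ) 1, HasDerivWithinAt f (f' u) (Icc 0 1) u)
    (hf0 : ‖f 0‖ ≤ c * δ) (bound : ∀ u ∈ Icc (0:ℝ) 1, ‖f' u‖ ≤ K * ‖f u‖ + c * ε) :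
    ∀ s ∈ Icc (0:ℝ) 1, ‖f s‖ ≤ c * gronwallBound δ K ε 1 := by
  intro s hs
  have hsub : Icc 0 s ⊆ Icc (0:ℝ) 1 := Icc_subset_Icc_right hs.2
  have hgron := norm_le_gronwallBound_of_norm_deriv_right_le
    (fun u hu => (hf u (hsub hu)).continuousWithinAt.mono hsub)
    (fun u hu => (hf u (hsub (Ico_subset_Icc_self hu))).mono_of_mem_nhdsWithin
      (Icc_mem_nhdsGE_of_mem ⟨hu.1, hu.2.trans_le hs.2⟩))
    hf0 (fun u hu => bound u (hsub (Ico_subset_Icc_self hu))) s ⟨hs.1, le_rfl⟩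
  rw [sub_zero, gronwallBound_mul_mul] at hgron
  exact hgron.trans (mul_le_mul_of_nonneg_left (gronwallBound_mono hδ hε hK hs.2) hc)

theorem IsIdempotentElem.mul_mul_eq_zero_of_eq_add {R : Type*} [Ring R] {p q : R}
    (hp : IsIdempotentElem p) (hq : q = q * p + p * q) : p * q * p = 0 := by
  have h := congrArg (p * ·) hq
  simp only [mul_add, ← mul_assoc, hp.eq] at h
  exact add_eq_right.mp h.symm

theorem ContinuousLinearMap.mul_eq_zero_of_range_one_sub_eq {R M : Type*} [Ring R]
    [TopologicalSpace M] [AddCommGroup M] [IsTopologicalAddGroup M] [Module R M]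
    {P L : M →L[R] M} (hP : IsIdempotentElem P)
    (h : LinearMap.range ((1 - P : M →L[R] M) : M →ₗ[R] M) = LinearMap.range (L : M →ₗ[R] M)) :
    P * L = 0 := by
  ext z
  obtain ⟨w, hw⟩ : L z ∈ LinearMap.range ((1 - P : M →L[R] M) : M →ₗ[R] M) := h ▸ ⟨z, rfl⟩
  change P (L z) = 0
  rw [← hw]
  change (P * (1 - P)) w = 0
  rw [mul_sub, mul_one, hP.eq, sub_self]
  rfl

theorem HasDerivWithinAt.eq_mul_add_mul_of_isIdempotentElem {𝕜 R : Type*}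
    [NontriviallyNormedField 𝕜] [NormedRing R] [NormedAlgebra 𝕜 R] {p : 𝕜 → R} {p' : R}
    {s : Set 𝕜} {u : 𝕜} (hp : ∀ t ∈ s, IsIdempotentElem (p t)) (hp' : HasDerivWithinAt p p' s u)
    (hu : u ∈ s) (hs : UniqueDiffWithinAt 𝕜 s u) : p' = p' * p u + p u * p' :=
  hs.eq_deriv _ hp' ((hp'.mul hp').congr (fun t ht => (hp t ht).eq.symm) (hp u hu).eq.symm)

theorem ContDiffOn.contDiffOn_deriv_of_hasDerivWithinAt {𝕜 F : Type*}
    [NontriviallyNormedField 𝕜] [NormedAddCommGroup F] [NormedSpace 𝕜 F] {f f' : 𝕜 → F}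
    {s : Set 𝕜} {n : WithTop ℕ∞} (hs : UniqueDiffOn 𝕜 s) (hf : ContDiffOn 𝕜 (n + 1) f s)
    (hf' : ∀ t ∈ s, HasDerivWithinAt f (f' t) s t) : ContDiffOn 𝕜 n f' s :=
  (hf.derivWithin hs le_rfl).congr fun t ht => ((hf' t ht).derivWithin (hs t ht)).symm

section Adiabatic

variable {R : Type*} [NormedRing R] [NormedAlgebra ℝ R] {p q a l x y g' : ℝ → R}
  {s : Set ℝ} {u ε : ℝ}

theorem hasDerivWithinAt_corrected_slow (hε : ε ≠ 0) (hpp : IsIdempotentElem (p u))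
    (hq : q u = q u * p u + p u * q u) (hpl : p u * l u = 0) (hal : a u * l u = 1 - p u)
    (hp : HasDerivWithinAt p (q u) s u)
    (hg : HasDerivWithinAt (fun t => p t * q t * a t) (g' u) s u)
    (hx : HasDerivWithinAt x (ε⁻¹ • (l u * x u)) s u) :
    HasDerivWithinAt (fun t => (p t - ε • (p t * q t * a t)) * x t)
      (q u * p u * x u - ε • (g' u * x u)) s u := by
  have hc : HasDerivWithinAt (fun t => p t - ε • (p t * q t * a t)) (q u - ε • g' u) s u :=
    hp.sub (hg.const_smul ε)
  refine (hc.mul hx).congr_deriv ?_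
  have hGl : p u * q u * a u * l u = p u * q u := by
    rw [mul_assoc _ (a u), hal, mul_sub, mul_one, hpp.mul_mul_eq_zero_of_eq_add hq, sub_zero]
  have hfast : (p u - ε • (p u * q u * a u)) * ε⁻¹ • (l u * x u) = -(p u * q u * x u) := by
    rw [mul_smul_comm, sub_mul, smul_mul_assoc, smul_sub, smul_smul, inv_mul_cancel₀ hε,
      one_smul, ← mul_assoc, hpl, zero_mul, smul_zero, ← mul_assoc, hGl, zero_sub]
  rw [hfast, eq_sub_of_add_eq hq.symm, sub_mul, sub_mul, smul_mul_assoc]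
  abel

theorem hasDerivWithinAt_corrected_slow_sub (hε : ε ≠ 0) (hpp : IsIdempotentElem (p u))
    (hq : q u = q u * p u + p u * q u) (hpl : p u * l u = 0) (hal : a u * l u = 1 - p u)
    (hp : HasDerivWithinAt p (q u) s u)
    (hg : HasDerivWithinAt (fun t => p t * q t * a t) (g' u) s u)
    (hx : HasDerivWithinAt x (ε⁻¹ • (l u * x u)) s u)
    (hy : HasDerivWithinAt y ((q u * p u - p u * q u) * y u) s u) :
    HasDerivWithinAt (fun t => (p t - ε • (p t * q t * a t)) * x t - y t)
      ((q u * p u - p u * q u) * ((p u - ε • (p u * q u * a u)) * x u - y u)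
        + ε • (((q u * p u - p u * q u) * (p u * q u * a u) - g' u) * x u)) s u := by
  refine ((hasDerivWithinAt_corrected_slow hε hpp hq hpl hal hp hg hx).sub hy).congr_deriv ?_
  have hKp : (q u * p u - p u * q u) * p u = q u * p u := by
    rw [sub_mul, mul_assoc, hpp.eq, hpp.mul_mul_eq_zero_of_eq_add hq, sub_zero]
  rw [mul_sub (q u * p u - p u * q u) _ (y u), ← mul_assoc (q u * p u - p u * q u) (p u - _),
    mul_sub, hKp, mul_smul_comm]
  simp only [sub_mul, smul_sub, smul_mul_assoc]
  abel

theorem norm_slow_sub_transport_le {κ γ μ : ℝ} (hε : 0 < ε)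
    (hpp : ∀ u ∈ Icc (0:ℝ) 1, IsIdempotentElem (p u))
    (hpl : ∀ u ∈ Icc (0:ℝ) 1, p u * l u = 0) (hal : ∀ u ∈ Icc (0:ℝ) 1, a u * l u = 1 - p u)
    (hp : ∀ u ∈ Icc (0:ℝ) 1, HasDerivWithinAt p (q u) (Icc 0 1) u)
    (hg : ∀ u ∈ Icc (0:ℝ) 1, HasDerivWithinAt (fun t => p t * q t * a t) (g' u) (Icc 0 1) u)
    (hx : ∀ u ∈ Icc (0:ℝ) 1, HasDerivWithinAt x (ε⁻¹ • (l u * x u)) (Icc 0 1) u)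
    (hy : ∀ u ∈ Icc (0:ℝ) 1, HasDerivWithinAt y ((q u * p u - p u * q u) * y u) (Icc 0 1) u)
    (hy0 : y 0 = p 0 * x 0) (hxb : ∀ u ∈ Icc (0:ℝ) 1, ‖x u‖ ≤ 1)
    (hκ : ∀ u ∈ Icc (0:ℝ) 1, ‖q u * p u - p u * q u‖ ≤ κ)
    (hγ : ∀ u ∈ Icc (0:ℝ) 1, ‖p u * q u * a u‖ ≤ γ) (hμ : ∀ u ∈ Icc (0:ℝ) 1, ‖g' u‖ ≤ μ) :
    ∀ s ∈ Icc (0:ℝ) 1, ‖p s * x s - y s‖ ≤ (gronwallBound γ κ (κ * γ + μ) 1 + γ) * ε := by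
  have h0 : (0:ℝ) ∈ Icc 0 1 := ⟨le_rfl, zero_le_one⟩
  have hκ0 : 0 ≤ κ := (norm_nonneg _).trans (hκ 0 h0)
  have hγ0 : 0 ≤ γ := (norm_nonneg _).trans (hγ 0 h0)
  have hμ0 : 0 ≤ μ := (norm_nonneg _).trans (hμ 0 h0)
  have hq : ∀ u ∈ Icc (0:ℝ) 1, q u = q u * p u + p u * q u := fun u hu =>
    (hp u hu).eq_mul_add_mul_of_isIdempotentElem hpp hu (uniqueDiffOn_Icc zero_lt_one u hu)
  have hv := fun u hu => hasDerivWithinAt_corrected_slow_sub hε.ne' (hpp u hu) (hq u hu)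
    (hpl u hu) (hal u hu) (hp u hu) (hg u hu) (hx u hu) (hy u hu)
  have hGx : ∀ u ∈ Icc (0:ℝ) 1, ‖ε • (p u * q u * a u * x u)‖ ≤ ε * γ := fun u hu => by
    rw [norm_smul, Real.norm_of_nonneg hε.le]
    exact mul_le_mul_of_nonneg_left ((norm_mul_le_of_le (hγ u hu) (hxb u hu)).trans_eq
      (mul_one γ)) hε.le
  have hv0 : ‖(p 0 - ε • (p 0 * q 0 * a 0)) * x 0 - y 0‖ ≤ ε * γ := by
    rw [hy0, sub_mul, smul_mul_assoc, sub_sub_cancel_left, norm_neg]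
    exact hGx 0 h0
  have hbound : ∀ u ∈ Icc (0:ℝ) 1,
      ‖(q u * p u - p u * q u) * ((p u - ε • (p u * q u * a u)) * x u - y u)
        + ε • (((q u * p u - p u * q u) * (p u * q u * a u) - g' u) * x u)‖
      ≤ κ * ‖(p u - ε • (p u * q u * a u)) * x u - y u‖ + ε * (κ * γ + μ) := fun u hu => by
    refine (norm_add_le _ _).trans (add_le_add (norm_mul_le_of_le (hκ u hu) le_rfl) ?_)
    rw [norm_smul, Real.norm_of_nonneg hε.le]
    refine mul_le_mul_of_nonneg_left ((norm_mul_le_of_le (norm_sub_le_of_le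
      (norm_mul_le_of_le (hκ u hu) (hγ u hu)) (hμ u hu)) (hxb u hu)).trans_eq (mul_one _)) hε.le
  intro s hs
  have hvs := norm_le_mul_gronwallBound_of_hasDerivWithinAt hε.le hγ0 hκ0 (by positivity) hv hv0
    hbound s hs
  calc ‖p s * x s - y s‖
      = ‖((p s - ε • (p s * q s * a s)) * x s - y s) + ε • (p s * q s * a s * x s)‖ := by
        rw [sub_mul, smul_mul_assoc, sub_right_comm, sub_add_cancel]
    _ ≤ ε * gronwallBound γ κ (κ * γ + μ) 1 + ε * γ :=
        (norm_add_le _ _).trans (add_le_add hvs (hGx s hs))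
    _ = (gronwallBound γ κ (κ * γ + μ) 1 + γ) * ε := by ring

end Adiabatic

theorem decoupling_slow_fast_general
    {B : Type*} [NormedAddCommGroup B] [NormedSpace ℂ B]
    (L P P' A : ℝ → B →L[ℂ] B) (T : ℝ → ℝ → B →L[ℂ] B)
    (U : ℝ → ℝ → ℝ → B →L[ℂ] B)
    -- `P s` is a projection onto `ker (L s)` along `ran (L s)`
    (hproj : ∀ s ∈ Icc (0:ℝ) 1, (P s).comp (P s) = P s)
    (hranQ : ∀ s ∈ Icc (0:ℝ) 1, LinearMap.range (((1 - P s : B →L[ℂ] B) : B →ₗ[ℂ] B)) = LinearMap.range (L s : B →ₗ[ℂ] B))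
    -- `A s` is the reduced inverse `L s ⁻¹`
    (hAL : ∀ s ∈ Icc (0:ℝ) 1, (A s).comp (L s) = 1 - P s)
    -- the families are `C²` in norm, and `P'` is the derivative of `P`
    (hPsmooth : ContDiffOn ℝ 2 P (Icc (0:ℝ) 1))
    (hAsmooth : ContDiffOn ℝ 2 A (Icc (0:ℝ) 1))
    (hP' : ∀ s ∈ Icc (0:ℝ) 1, HasDerivAt P (P' s) s)
    -- parallel transport of the family `P`
    (hTinit : ∀ s' ∈ Icc (0:ℝ) 1, T s' s' = 1)
    (hTode : ∀ s' ∈ Icc (0:ℝ) 1, ∀ s ∈ Icc (0:ℝ) 1,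
      HasDerivAt (fun u => T u s')
        ((((P' s).comp (P s) - (P s).comp (P' s)).comp (T s s'))) s)
    -- the propagator `U ε`, a contraction solving `ε ∂ₛ U ε s s' = L s ∘ U ε s s'`
    (hUinit : ∀ ε > (0:ℝ), ∀ s ∈ Icc (0:ℝ) 1, U ε s s = 1)
    (hUnorm : ∀ ε > (0:ℝ), ∀ s' ∈ Icc (0:ℝ) 1, ∀ s ∈ Icc (0:ℝ) 1, s' ≤ s →
      ‖U ε s s'‖ ≤ 1)
    (hUode : ∀ ε > (0:ℝ), ∀ s' ∈ Icc (0:ℝ) 1, ∀ s ∈ Icc (0:ℝ) 1, s' ≤ s →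
      HasDerivAt (fun u => U ε u s') (ε⁻¹ • (L s).comp (U ε s s')) s) :
    ∃ C : ℝ, ∀ ε ∈ Ioc (0:ℝ) 1, ∀ x₀ : B, ∀ s ∈ Icc (0:ℝ) 1,
      ‖P s (U ε s 0 x₀) - T s 0 (P 0 x₀)‖ ≤ C * ε * ‖x₀‖ := by
  have hI : UniqueDiffOn ℝ (Icc (0:ℝ) 1) := uniqueDiffOn_Icc one_pos
  have h0 : (0:ℝ) ∈ Icc 0 1 := ⟨le_rfl, zero_le_one⟩
  have hP'smooth : ContDiffOn ℝ 1 P' (Icc 0 1) :=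
    hPsmooth.contDiffOn_deriv_of_hasDerivWithinAt hI fun t ht => (hP' t ht).hasDerivWithinAt
  have hG : ContDiffOn ℝ 1 (fun t => P t * P' t * A t) (Icc 0 1) :=
    ((hPsmooth.of_le one_le_two).mul hP'smooth).mul (hAsmooth.of_le one_le_two)
  obtain ⟨κ, hκ⟩ := isCompact_Icc.exists_bound_of_continuousOn
    ((hP'smooth.continuousOn.mul hPsmooth.continuousOn).sub
      (hPsmooth.continuousOn.mul hP'smooth.continuousOn))
  obtain ⟨γ, hγ⟩ := isCompact_Icc.exists_bound_of_continuousOn hG.continuousOn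
  obtain ⟨μ, hμ⟩ := isCompact_Icc.exists_bound_of_continuousOn
    (hG.continuousOn_derivWithin hI le_rfl)
  refine ⟨gronwallBound γ κ (κ * γ + μ) 1 + γ, fun ε hε x₀ s hs => ?_⟩
  have key := norm_slow_sub_transport_le (x := fun u => U ε u 0)
    (y := fun u => T u 0 * P 0) hε.1 hproj
    (fun u hu => ContinuousLinearMap.mul_eq_zero_of_range_one_sub_eq (hproj u hu) (hranQ u hu))
    hAL (fun u hu => (hP' u hu).hasDerivWithinAt)
    (fun u hu => (hG.differentiableOn one_ne_zero u hu).hasDerivWithinAt)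
    (fun u hu => (hUode ε hε.1 0 h0 u hu hu.1).hasDerivWithinAt)
    (fun u hu =>
      (((hTode 0 h0 u hu).mul_const (P 0)).congr_deriv (mul_assoc _ _ _)).hasDerivWithinAt)
    (by simp only [hTinit 0 h0, hUinit ε hε.1 0 h0, one_mul, mul_one])
    (fun u hu => hUnorm ε hε.1 0 h0 u hu hu.1) hκ hγ hμ s hs
  calc ‖P s (U ε s 0 x₀) - T s 0 (P 0 x₀)‖ = ‖(P s * U ε s 0 - T s 0 * P 0) x₀‖ := rfl
    _ ≤ ‖P s * U ε s 0 - T s 0 * P 0‖ * ‖x₀‖ := ContinuousLinearMap.le_opNorm _ _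
    _ ≤ _ := mul_le_mul_of_nonneg_right key (norm_nonneg _)

/-- **Decoupling of slow and fast variables.**  Let `L s` be a `C²` family of
bounded operators on a complex Banach space `B` with spectral projections `P s` onto
`ker (L s)` along `ran (L s)`, reduced inverses `A s`, parallel transport `T`, and a
contraction propagator `U ε`.  Then there is a constant `C`, depending only on the family,
such that the solution `x s = U ε s 0 x₀` of `ε ẋ = L s x` satisfies
`‖P s (x s) − T s 0 (P 0 x₀)‖ ≤ C ε ‖x₀‖` for all `ε ∈ (0,1]`, `x₀ ∈ B`, `s ∈ [0,1]`. -/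
theorem decoupling_slow_fast
    {B : Type*} [NormedAddCommGroup B] [NormedSpace ℂ B] [CompleteSpace B]
    (L P P' A : ℝ → B →L[ℂ] B) (T : ℝ → ℝ → B →L[ℂ] B)
    (U : ℝ → ℝ → ℝ → B →L[ℂ] B)
    -- `P s` is a projection onto `ker (L s)` along `ran (L s)`
    (hproj : ∀ s ∈ Icc (0:ℝ) 1, (P s).comp (P s) = P s)
    (hranP : ∀ s ∈ Icc (0:ℝ) 1, LinearMap.range (P s : B →ₗ[ℂ] B) = LinearMap.ker (L s : B →ₗ[ℂ] B))
    (hranQ : ∀ s ∈ Icc (0:ℝ) 1, LinearMap.range (((1 - P s : B →L[ℂ] B) : B →ₗ[ℂ] B)) = LinearMap.range (L s : B →ₗ[ℂ] B))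
    -- `A s` is the reduced inverse `L s ⁻¹`
    (hAL : ∀ s ∈ Icc (0:ℝ) 1, (A s).comp (L s) = 1 - P s)
    (hLA : ∀ s ∈ Icc (0:ℝ) 1, (L s).comp (A s) = 1 - P s)
    (hAP : ∀ s ∈ Icc (0:ℝ) 1, (A s).comp (P s) = 0)
    (hPA : ∀ s ∈ Icc (0:ℝ) 1, (P s).comp (A s) = 0)
    -- the families are `C²` in norm, and `P'` is the derivative of `P`
    (hLsmooth : ContDiffOn ℝ 2 L (Icc (0:ℝ) 1))
    (hPsmooth : ContDiffOn ℝ 2 P (Icc (0:ℝ) 1))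
    (hAsmooth : ContDiffOn ℝ 2 A (Icc (0:ℝ) 1))
    (hP' : ∀ s ∈ Icc (0:ℝ) 1, HasDerivAt P (P' s) s)
    -- parallel transport of the family `P`
    (hTinit : ∀ s' ∈ Icc (0:ℝ) 1, T s' s' = 1)
    (hTode : ∀ s' ∈ Icc (0:ℝ) 1, ∀ s ∈ Icc (0:ℝ) 1,
      HasDerivAt (fun u => T u s')
        ((((P' s).comp (P s) - (P s).comp (P' s)).comp (T s s'))) s)
    -- the propagator `U ε`, a contraction solving `ε ∂ₛ U ε s s' = L s ∘ U ε s s'`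
    (hUinit : ∀ ε > (0:ℝ), ∀ s ∈ Icc (0:ℝ) 1, U ε s s = 1)
    (hUnorm : ∀ ε > (0:ℝ), ∀ s' ∈ Icc (0:ℝ) 1, ∀ s ∈ Icc (0:ℝ) 1, s' ≤ s →
      ‖U ε s s'‖ ≤ 1)
    (hUode : ∀ ε > (0:ℝ), ∀ s' ∈ Icc (0:ℝ) 1, ∀ s ∈ Icc (0:ℝ) 1, s' ≤ s →
      HasDerivAt (fun u => U ε u s') (ε⁻¹ • (L s).comp (U ε s s')) s) :
    ∃ C : ℝ, ∀ ε ∈ Ioc (0:ℝ) 1, ∀ x₀ : B, ∀ s ∈ Icc (0:ℝ) 1,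
      ‖P s (U ε s 0 x₀) - T s 0 (P 0 x₀)‖ ≤ C * ε * ‖x₀‖ :=
  decoupling_slow_fast_general L P P' A T U hproj hranQ hAL hPsmooth hAsmooth hP' hTinit hTode
    hUinit hUnorm hUode
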